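/- Let a_k = (1/(2^k·k!))·[d^{2k}/dz^{2k} (z²/(2(e^z − 1 − z)))^{k+1/2}]_{z=0}. Then a_0 = 1, a_1 = 1/12, a_2 = 1/288, and a_3 = −139/51840. -/

import Mathlib

noncomputable def a (k : ℕ) : ℝ :=
  (1 / (2 ^ k * Nat.factorial k)) *
    iteratedDeriv (2 * k)
      (fun z : ℝ =>
        (if z = 0 then 1 else z ^ 2 / (2 * (Real.exp z - 1 - z))) ^ ((k : ℝ) + 1 / 2)) 0

/-!
The base of the power in `a k` is `1/φ`, where `φ(z) = 2(eᶻ - 1 - z)/z² = ∑ 2zⁿ/(n+2)!` is entire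
and positive on `ℝ`, with `φ⁽ⁿ⁾(0) = 2/((n+1)(n+2))`. Hence `f = φ^(-(k+1/2))` is smooth and
satisfies `φ f' = -(k+1/2) φ' f`. Differentiating this `n` times at `0` by the Leibniz rule gives,
since `φ(0) = 1`, a triangular linear recurrence for the numbers `f⁽ⁿ⁾(0)`, which is solved up to
`n = 6`.
-/

open Finset FormalMultilinearSeries
open scoped Nat

section RpowLeibniz

variable {g : ℝ → ℝ}

lemma mul_deriv_rpow_const (hg : Differentiable ℝ g) (hg0 : ∀ z, g z ≠ 0) (s : ℝ) :
    (fun z => g z * deriv (fun z => g z ^ s) z) = fun z => s * (deriv g z * g z ^ s) := by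
  ext z
  rw [((hg z).hasDerivAt.rpow_const (Or.inl (hg0 z))).deriv, Real.rpow_sub_one (hg0 z)]
  field_simp [hg0 z]

lemma leibniz_mul_deriv_rpow_const {n : ℕ} (hg : ContDiff ℝ (n + 1) g) (hg0 : ∀ z, g z ≠ 0)
    (s x : ℝ) :
    ∑ i ∈ range (n + 1), n.choose i * iteratedDeriv i g x *
        iteratedDeriv (n - i + 1) (fun z => g z ^ s) x =
      s * ∑ i ∈ range (n + 1), n.choose i * iteratedDeriv (i + 1) g x *
        iteratedDeriv (n - i) (fun z => g z ^ s) x := by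
  have hf : ContDiff ℝ (n + 1) fun z => g z ^ s := hg.rpow_const_of_ne hg0
  have h := congrArg (iteratedDeriv n · x)
    (mul_deriv_rpow_const (hg.differentiable (by simp)) hg0 s)
  rw [iteratedDeriv_fun_mul (hg.of_le le_self_add).contDiffAt hf.deriv'.contDiffAt,
    iteratedDeriv_const_mul _ (hg.deriv'.mul (hf.of_le le_self_add)).contDiffAt,
    iteratedDeriv_fun_mul hg.deriv'.contDiffAt (hf.of_le le_self_add).contDiffAt] at h
  simpa only [← iteratedDeriv_succ'] using h

end RpowLeibniz

noncomputable def phi (z : ℝ) : ℝ := if z = 0 then 1 else 2 * (Real.exp z - 1 - z) / z ^ 2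

noncomputable def phiSeries : FormalMultilinearSeries ℝ ℝ ℝ :=
  ofScalars ℝ fun n => 2 / (n + 2)!

lemma phi_zero : phi 0 = 1 := if_pos rfl

lemma phi_pos (z : ℝ) : 0 < phi z := by
  rcases eq_or_ne z 0 with rfl | hz
  · simp [phi_zero]
  · have := Real.add_one_lt_exp hz
    rw [phi, if_neg hz]
    exact div_pos (by linarith) (by positivity)

lemma hasSum_phi (y : ℝ) : HasSum (fun n : ℕ => 2 / (n + 2)! * y ^ n) (phi y) := by
  rcases eq_or_ne y 0 with rfl | hy
  · simpa [phi_zero] using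
      hasSum_single (f := fun n : ℕ => 2 / ((n + 2)! : ℝ) * 0 ^ n) 0 (by simp_all)
  have hexp := (hasSum_nat_add_iff' 2).mpr (NormedSpace.expSeries_div_hasSum_exp y)
  rw [← Real.exp_eq_exp_ℝ] at hexp
  convert hexp.mul_left (2 / y ^ 2) using 1
  · rfl
  · ext n
    field_simp
    ring
  · simp only [phi, hy, if_false, sum_range_succ, sum_range_zero]
    norm_num
    ring

lemma phi_hasFPowerSeriesOnBall : HasFPowerSeriesOnBall phi phiSeries 0 ⊤ where
  r_le := by
    refine le_of_eq (radius_eq_top_of_summable_norm _ fun r => ?_).symm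
    simpa [phiSeries, ofScalars_norm, abs_of_pos] using (hasSum_phi r).summable
  r_pos := ENNReal.zero_lt_top
  hasSum _ := by simpa [phiSeries, ofScalars_apply_eq, mul_comm] using hasSum_phi _

lemma contDiff_phi {n : WithTop ℕ∞} : ContDiff ℝ n phi :=
  AnalyticOnNhd.contDiff fun z _ => phi_hasFPowerSeriesOnBall.analyticOnNhd z (by simp)

lemma iteratedDeriv_phi_zero (n : ℕ) : iteratedDeriv n phi 0 = 2 / ((n + 1) * (n + 2)) := by
  rw [iteratedDeriv_eq_iteratedFDeriv, ← phi_hasFPowerSeriesOnBall.factorial_smul 1 n]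
  simp only [phiSeries, apply_eq_prod_smul_coeff, coeff_ofScalars, prod_const_one,
    smul_eq_mul, one_mul, nsmul_eq_mul, Nat.factorial_succ]
  push_cast
  field_simp
  ring

lemma phi_rpow_recurrence (s : ℝ) (n : ℕ) :
    ∑ i ∈ range (n + 1), n.choose i * (2 / ((i + 1) * (i + 2))) *
        iteratedDeriv (n - i + 1) (fun z => phi z ^ s) 0 =
      s * ∑ i ∈ range (n + 1), n.choose i * (2 / ((i + 2) * (i + 3))) *
        iteratedDeriv (n - i) (fun z => phi z ^ s) 0 := by
  have h := leibniz_mul_deriv_rpow_const contDiff_phi (fun z => (phi_pos z).ne') s 0 (n := n)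
  push_cast [iteratedDeriv_phi_zero] at h
  convert h using 5
  ring

lemma iteratedDeriv_two_phi_rpow :
    iteratedDeriv 2 (fun z => phi z ^ (-(3 / 2) : ℝ)) 0 = 1 / 6 := by
  have h0 := phi_rpow_recurrence (-(3 / 2)) 0
  have h1 := phi_rpow_recurrence (-(3 / 2)) 1
  simp only [sum_range_succ, sum_range_zero, Nat.choose] at h0 h1
  norm_num [phi_zero] at h0 h1
  linarith

lemma iteratedDeriv_four_phi_rpow :
    iteratedDeriv 4 (fun z => phi z ^ (-(5 / 2) : ℝ)) 0 = 1 / 36 := by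
  have h0 := phi_rpow_recurrence (-(5 / 2)) 0
  have h1 := phi_rpow_recurrence (-(5 / 2)) 1
  have h2 := phi_rpow_recurrence (-(5 / 2)) 2
  have h3 := phi_rpow_recurrence (-(5 / 2)) 3
  simp only [sum_range_succ, sum_range_zero, Nat.choose] at h0 h1 h2 h3
  norm_num [phi_zero] at h0 h1 h2 h3
  linarith

lemma iteratedDeriv_six_phi_rpow :
    iteratedDeriv 6 (fun z => phi z ^ (-(7 / 2) : ℝ)) 0 = -139 / 1080 := by
  have h0 := phi_rpow_recurrence (-(7 / 2)) 0
  have h1 := phi_rpow_recurrence (-(7 / 2)) 1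
  have h2 := phi_rpow_recurrence (-(7 / 2)) 2
  have h3 := phi_rpow_recurrence (-(7 / 2)) 3
  have h4 := phi_rpow_recurrence (-(7 / 2)) 4
  have h5 := phi_rpow_recurrence (-(7 / 2)) 5
  simp only [sum_range_succ, sum_range_zero, Nat.choose] at h0 h1 h2 h3 h4 h5
  norm_num [phi_zero] at h0 h1 h2 h3 h4 h5
  linarith

lemma a_eq_iteratedDeriv_phi_rpow (k : ℕ) :
    a k = 1 / (2 ^ k * k !) * iteratedDeriv (2 * k) (fun z => phi z ^ (-(k + 1 / 2) : ℝ)) 0 := by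
  have hbase (z : ℝ) :
      (if z = 0 then 1 else z ^ 2 / (2 * (Real.exp z - 1 - z))) = (phi z)⁻¹ := by
    unfold phi
    split_ifs <;> simp [inv_div]
  simp only [a, hbase, Real.inv_rpow (phi_pos _).le, Real.rpow_neg (phi_pos _).le]

theorem a_values : a 0 = 1 ∧ a 1 = 1 / 12 ∧ a 2 = 1 / 288 ∧ a 3 = -139 / 51840 := by
  simp only [a_eq_iteratedDeriv_phi_rpow]
  refine ⟨by simp [phi_zero], ?_, ?_, ?_⟩
  · rw [show -((1 : ℕ) + 1 / 2 : ℝ) = -(3 / 2) by norm_num, iteratedDeriv_two_phi_rpow]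
    norm_num
  · rw [show -((2 : ℕ) + 1 / 2 : ℝ) = -(5 / 2) by norm_num, iteratedDeriv_four_phi_rpow]
    norm_num [Nat.factorial]
  · rw [show -((3 : ℕ) + 1 / 2 : ℝ) = -(7 / 2) by norm_num, iteratedDeriv_six_phi_rpow]
    norm_num [Nat.factorial]
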